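/- In Cl(1,3), let B₁ = (1/√2)(1 + γ₁γ₀γ₂γ₀) and B₂ = (1/√2)(1 + γ₂γ₀γ₃γ₀). Then B₁B₂B₁ = B₂B₁B₂ (the braid relation), and both sides equal (1/√2)(γ₁γ₀γ₂γ₀ + γ₂γ₀γ₃γ₀). -/
import Mathlib

lemma braid_aux {A : Type*} [Ring A] (a b : A)
    (ha : a * a = -1) (hb : b * b = -1) (hab : a * b = -(b * a)) :
    (1 + a) * (1 + b) * (1 + a) = 2 * a + 2 * b ∧
    (1 + b) * (1 + a) * (1 + b) = 2 * a + 2 * b := by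
  have haba : a * b * a = b := by
    rw [hab, neg_mul, mul_assoc, ha, mul_neg_one, neg_neg]
  have hbab : b * a * b = a := by
    have hba : b * a = -(a * b) := by rw [hab, neg_neg]
    rw [hba, neg_mul, mul_assoc, hb, mul_neg_one, neg_neg]
  constructor
  · have e : (1 + a) * (1 + b) * (1 + a)
        = 1 + b + a + a * b + a + b * a + a * a + a * b * a := by noncomm_ring
    rw [e, ha, haba, hab]
    noncomm_ring
  · have e : (1 + b) * (1 + a) * (1 + b)
        = 1 + a + b + b * a + b + a * b + b * b + b * a * b := by noncomm_ring
    rw [e, hb, hbab, hab]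
    noncomm_ring

/-- In Cl(1,3), B₁ = (1/√2)(1 + γ₁γ₀γ₂γ₀) and B₂ = (1/√2)(1 + γ₂γ₀γ₃γ₀)
satisfy the braid relation, and both sides equal (1/√2)(γ₁γ₀γ₂γ₀ + γ₂γ₀γ₃γ₀). -/
theorem stmt_6 {A : Type*} [Ring A] [Algebra ℝ A] (γ : Fin 4 → A)
    (hγ : ∀ μ ν : Fin 4, γ μ * γ ν + γ ν * γ μ =
      algebraMap ℝ A (2 * (if μ = ν then (if μ = 0 then 1 else -1) else 0))) :
    ((Real.sqrt 2)⁻¹ • (1 + γ 1 * γ 0 * (γ 2 * γ 0))) *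
        ((Real.sqrt 2)⁻¹ • (1 + γ 2 * γ 0 * (γ 3 * γ 0))) *
        ((Real.sqrt 2)⁻¹ • (1 + γ 1 * γ 0 * (γ 2 * γ 0)))
      = ((Real.sqrt 2)⁻¹ • (1 + γ 2 * γ 0 * (γ 3 * γ 0))) *
        ((Real.sqrt 2)⁻¹ • (1 + γ 1 * γ 0 * (γ 2 * γ 0))) *
        ((Real.sqrt 2)⁻¹ • (1 + γ 2 * γ 0 * (γ 3 * γ 0))) ∧
      ((Real.sqrt 2)⁻¹ • (1 + γ 1 * γ 0 * (γ 2 * γ 0))) *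
        ((Real.sqrt 2)⁻¹ • (1 + γ 2 * γ 0 * (γ 3 * γ 0))) *
        ((Real.sqrt 2)⁻¹ • (1 + γ 1 * γ 0 * (γ 2 * γ 0)))
      = (Real.sqrt 2)⁻¹ • (γ 1 * γ 0 * (γ 2 * γ 0) + γ 2 * γ 0 * (γ 3 * γ 0)) := by
  -- anticommutation of distinct generators
  have anti : ∀ μ ν : Fin 4, μ ≠ ν → γ μ * γ ν = -(γ ν * γ μ) := by
    intro μ ν h
    have h' := hγ μ ν
    rw [if_neg h, mul_zero, map_zero] at h'
    exact eq_neg_of_add_eq_zero_left h'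
  -- squares
  have sq : ∀ μ : Fin 4, γ μ * γ μ = algebraMap ℝ A (if μ = 0 then 1 else -1) := by
    intro μ
    have h' := hγ μ μ
    rw [if_pos rfl] at h'
    have h2 : (2 : ℝ) • (γ μ * γ μ) = (2 : ℝ) • algebraMap ℝ A (if μ = 0 then 1 else -1) := by
      rw [two_smul, h', map_mul, Algebra.smul_def]
    calc γ μ * γ μ = (2 : ℝ)⁻¹ • ((2 : ℝ) • (γ μ * γ μ)) := by
          rw [smul_smul]; norm_num
      _ = (2 : ℝ)⁻¹ • ((2 : ℝ) • algebraMap ℝ A (if μ = 0 then 1 else -1)) := by rw [h2]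
      _ = algebraMap ℝ A (if μ = 0 then 1 else -1) := by rw [smul_smul]; norm_num
  have sq0 : γ 0 * γ 0 = 1 := by simpa using sq 0
  have sq1 : γ 1 * γ 1 = -1 := by have := sq 1; simpa using this
  have sq2 : γ 2 * γ 2 = -1 := by have := sq 2; simpa using this
  have sq3 : γ 3 * γ 3 = -1 := by have := sq 3; simpa using this
  -- reduced forms
  have ha' : γ 1 * γ 0 * (γ 2 * γ 0) = -(γ 1 * γ 2) := by
    calc γ 1 * γ 0 * (γ 2 * γ 0) = γ 1 * ((γ 0 * γ 2) * γ 0) := by noncomm_ring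
      _ = γ 1 * (-(γ 2 * γ 0) * γ 0) := by rw [anti 0 2 (by decide)]
      _ = -(γ 1 * γ 2 * (γ 0 * γ 0)) := by noncomm_ring
      _ = -(γ 1 * γ 2) := by rw [sq0, mul_one]
  have hb' : γ 2 * γ 0 * (γ 3 * γ 0) = -(γ 2 * γ 3) := by
    calc γ 2 * γ 0 * (γ 3 * γ 0) = γ 2 * ((γ 0 * γ 3) * γ 0) := by noncomm_ring
      _ = γ 2 * (-(γ 3 * γ 0) * γ 0) := by rw [anti 0 3 (by decide)]
      _ = -(γ 2 * γ 3 * (γ 0 * γ 0)) := by noncomm_ring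
      _ = -(γ 2 * γ 3) := by rw [sq0, mul_one]
  set a : A := -(γ 1 * γ 2) with ha_def
  set b : A := -(γ 2 * γ 3) with hb_def
  have haa : a * a = -1 := by
    calc a * a = γ 1 * (γ 2 * γ 1) * γ 2 := by rw [ha_def]; noncomm_ring
      _ = γ 1 * (-(γ 1 * γ 2)) * γ 2 := by rw [anti 2 1 (by decide)]
      _ = -(γ 1 * γ 1 * (γ 2 * γ 2)) := by noncomm_ring
      _ = -1 := by rw [sq1, sq2]; noncomm_ring
  have hbb : b * b = -1 := by
    calc b * b = γ 2 * (γ 3 * γ 2) * γ 3 := by rw [hb_def]; noncomm_ring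
      _ = γ 2 * (-(γ 2 * γ 3)) * γ 3 := by rw [anti 3 2 (by decide)]
      _ = -(γ 2 * γ 2 * (γ 3 * γ 3)) := by noncomm_ring
      _ = -1 := by rw [sq2, sq3]; noncomm_ring
  have hab : a * b = -(b * a) := by
    have h1 : a * b = -(γ 1 * γ 3) := by
      calc a * b = γ 1 * (γ 2 * γ 2) * γ 3 := by rw [ha_def, hb_def]; noncomm_ring
        _ = γ 1 * (-1) * γ 3 := by rw [sq2]
        _ = -(γ 1 * γ 3) := by noncomm_ring
    have h2 : b * a = γ 1 * γ 3 := by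
      calc b * a = γ 2 * ((γ 3 * γ 1) * γ 2) := by rw [ha_def, hb_def]; noncomm_ring
        _ = γ 2 * ((-(γ 1 * γ 3)) * γ 2) := by rw [anti 3 1 (by decide)]
        _ = -((γ 2 * γ 1) * (γ 3 * γ 2)) := by noncomm_ring
        _ = -((-(γ 1 * γ 2)) * (-(γ 2 * γ 3))) := by
              rw [anti 2 1 (by decide), anti 3 2 (by decide)]
        _ = -(γ 1 * (γ 2 * γ 2) * γ 3) := by noncomm_ring
        _ = γ 1 * γ 3 := by rw [sq2]; noncomm_ring
    rw [h1, h2]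
  obtain ⟨e1, e2⟩ := braid_aux a b haa hbb hab
  rw [ha', hb']
  set c : ℝ := (Real.sqrt 2)⁻¹ with hc_def
  have hcc : c * c = (2 : ℝ)⁻¹ := by
    rw [hc_def, ← mul_inv, Real.mul_self_sqrt (by norm_num)]
  have key : ∀ x y z : A, (c • x) * (c • y) * (c • z) = (c * c * c) • (x * y * z) := by
    intro x y z
    simp only [smul_mul_assoc, mul_smul_comm, smul_smul]
    ring_nf
  have h2ab : 2 * a + 2 * b = (2 : ℝ) • (a + b) := by
    rw [smul_add, two_smul, two_smul, two_mul, two_mul]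
  constructor
  · rw [key, key, e1, e2]
  · rw [key, e1, h2ab, smul_smul]
    congr 1
    linear_combination (2 * c) * hcc
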